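/- Let D be a 3-dicritical digraph. If D is not a bidirected odd cycle, then the digon graph B(D) contains no cycle, i.e., B(D) is a forest. -/

import Mathlib

/-!
Basic theory of finite digraphs: a digraph has a finite vertex set and a
finite set of arcs (ordered pairs of distinct vertices).
-/

/-- A finite digraph on a vertex type `V`: a finite vertex set together with a
finite set of arcs, each arc being an ordered pair of distinct vertices. -/
structure Digraph' (V : Type*) where
  verts : Finset V
  arcs : Finset (V × V)
  wf : ∀ a ∈ arcs, a.1 ∈ verts ∧ a.2 ∈ verts ∧ a.1 ≠ a.2

namespace Digraph'

variable {V : Type*} [DecidableEq V]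

/-- The number of vertices of a digraph. -/
def n (D : Digraph' V) : ℕ := D.verts.card

/-- The number of arcs of a digraph. -/
def m (D : Digraph' V) : ℕ := D.arcs.card

/-- The set of consecutive (cyclically) pairs of a list, i.e. the arcs of the
directed cycle running through the list. -/
def cyclicArcs (c : List V) : Finset (V × V) := (c.zip (c.rotate 1)).toFinset

/-- The set of consecutive pairs of a list, i.e. the arcs of the directed path
running through the list. -/
def pathArcs (p : List V) : Finset (V × V) := (p.zip p.tail).toFinset

/-- The symmetric closure of a set of arcs. -/
def symArcs (s : Finset (V × V)) : Finset (V × V) := s ∪ s.image Prod.swap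

/-- The arcs of the bidirected path running through a list (each consecutive
pair is joined by a digon). -/
def pathDigonArcs (p : List V) : Finset (V × V) := symArcs (pathArcs p)

/-- `p` is the list of vertices of a path of odd length (an odd number of edges,
equivalently an even number of vertices) from `a` to `b`. -/
def IsOddBidirPathList (p : List V) (a b : V) : Prop :=
  p.Nodup ∧ Even p.length ∧ p.head? = some a ∧ p.getLast? = some b

/-- The subdigraph induced by `S` contains no directed cycle.  A directed cycle
is given by a nonempty list of at least two distinct vertices, each one having an
arc towards the (cyclically) next one. -/
def AcyclicOn (D : Digraph' V) (S : Finset V) : Prop :=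
  ¬ ∃ c : List V, c.Nodup ∧ 2 ≤ c.length ∧ (∀ v ∈ c, v ∈ S) ∧ cyclicArcs c ⊆ D.arcs

/-- `φ` is a `k`-dicolouring of `D`: every colour class induces an acyclic
subdigraph. -/
def IsDicolouring (D : Digraph' V) (k : ℕ) (φ : V → Fin k) : Prop :=
  ∀ i : Fin k, D.AcyclicOn (D.verts.filter fun v => φ v = i)

/-- `D` admits a `k`-dicolouring. -/
def Dicolourable (D : Digraph' V) (k : ℕ) : Prop :=
  ∃ φ : V → Fin k, D.IsDicolouring k φ

/-- The dichromatic number of `D`: the least `k` such that `D` is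
`k`-dicolourable. -/
noncomputable def dichromatic (D : Digraph' V) : ℕ := sInf {k | D.Dicolourable k}

/-- `H` is a subdigraph of `D`. -/
def IsSubdigraph (H D : Digraph' V) : Prop := H.verts ⊆ D.verts ∧ H.arcs ⊆ D.arcs

/-- `H` is a proper subdigraph of `D`. -/
def IsProperSubdigraph (H D : Digraph' V) : Prop :=
  H.IsSubdigraph D ∧ (H.verts ≠ D.verts ∨ H.arcs ≠ D.arcs)

/-- `D` is `k`-dicritical: its dichromatic number is `k` and every proper
subdigraph has dichromatic number at most `k - 1`. -/
def Dicritical (k : ℕ) (D : Digraph' V) : Prop :=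
  D.dichromatic = k ∧
    ∀ H : Digraph' V, H.IsProperSubdigraph D → H.dichromatic ≤ k - 1

/-- `D` is an oriented graph: it has no digon. -/
def Oriented (D : Digraph' V) : Prop := ∀ a ∈ D.arcs, (a.2, a.1) ∉ D.arcs

/-- There is a digon between `u` and `v` in `D`. -/
def HasDigon (D : Digraph' V) (u v : V) : Prop :=
  (u, v) ∈ D.arcs ∧ (v, u) ∈ D.arcs

/-- `u` and `v` are neighbours: there is at least one arc between them. -/
def UAdj (D : Digraph' V) (u v : V) : Prop :=
  (u, v) ∈ D.arcs ∨ (v, u) ∈ D.arcs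

/-- `M` is a matching of digons of `D` (a matching of the digon graph `B(D)`):
a set of digons of `D`, pairwise sharing no end-vertex. -/
def IsDigonMatching (D : Digraph' V) (M : Finset (V × V)) : Prop :=
  (∀ p ∈ M, D.HasDigon p.1 p.2) ∧
    ∀ p ∈ M, ∀ q ∈ M, p ≠ q → p.1 ≠ q.1 ∧ p.1 ≠ q.2 ∧ p.2 ≠ q.1 ∧ p.2 ≠ q.2

/-- `π(D)`: the maximum size of a matching of the digon graph `B(D)`. -/
noncomputable def piNum (D : Digraph' V) : ℕ :=
  sSup {k | ∃ M : Finset (V × V), D.IsDigonMatching M ∧ M.card = k}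

/-- The potential `ρ(D) = 7 n(D) - 3 m(D) - 2 π(D)`. -/
noncomputable def potential (D : Digraph' V) : ℤ :=
  7 * (D.n : ℤ) - 3 * (D.m : ℤ) - 2 * (D.piNum : ℤ)

/-- The subdigraph of `D` induced by `R`. -/
def induce (D : Digraph' V) (R : Finset V) : Digraph' V where
  verts := D.verts ∩ R
  arcs := D.arcs.filter fun a => a.1 ∈ R ∧ a.2 ∈ R
  wf := by
    intro a ha
    rw [Finset.mem_filter] at ha
    obtain ⟨h, h1, h2⟩ := ha
    obtain ⟨hv1, hv2, hne⟩ := D.wf a h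
    exact ⟨Finset.mem_inter.mpr ⟨hv1, h1⟩, Finset.mem_inter.mpr ⟨hv2, h2⟩, hne⟩

/-- The potential `ρ_D(R)` of a set of vertices `R` in `D`: the potential of the
subdigraph of `D` induced by `R`. -/
noncomputable def potentialOn (D : Digraph' V) (R : Finset V) : ℤ :=
  (D.induce R).potential

/-- The digraph obtained from `D` by deleting the arc `a`. -/
def eraseArc (D : Digraph' V) (a : V × V) : Digraph' V where
  verts := D.verts
  arcs := D.arcs.erase a
  wf := fun b hb => D.wf b (Finset.mem_of_mem_erase hb)

/-- The digraph obtained from `D` by deleting the vertex `v`. -/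
def delVert (D : Digraph' V) (v : V) : Digraph' V where
  verts := D.verts.erase v
  arcs := D.arcs.filter fun a => a.1 ≠ v ∧ a.2 ≠ v
  wf := by
    intro a ha
    rw [Finset.mem_filter] at ha
    obtain ⟨h, h1, h2⟩ := ha
    obtain ⟨hv1, hv2, hne⟩ := D.wf a h
    exact ⟨Finset.mem_erase.mpr ⟨h1, hv1⟩, Finset.mem_erase.mpr ⟨h2, hv2⟩, hne⟩

/-- The degree of `v` in `D`: the number of arcs incident to `v`. -/
def degree (D : Digraph' V) (v : V) : ℕ :=
  (D.arcs.filter fun a => a.1 = v ∨ a.2 = v).card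

/-- `D` is a bidirected odd cycle: obtained from an undirected cycle of odd
length (at least 3) by replacing every edge by a digon. -/
def IsBidirectedOddCycle (D : Digraph' V) : Prop :=
  ∃ c : List V, c.Nodup ∧ 3 ≤ c.length ∧ Odd c.length ∧
    D.verts = c.toFinset ∧ D.arcs = symArcs (cyclicArcs c)

/-- `H` is a bidirected odd cycle with one arc removed. -/
def IsBidirOddCycleMinusArc (H : Digraph' V) : Prop :=
  ∃ (C : Digraph' V) (e : V × V), C.IsBidirectedOddCycle ∧ e ∈ C.arcs ∧
    H.verts = C.verts ∧ H.arcs = C.arcs.erase e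

/-- `D` is an odd 3-wheel with center `c`: a vertex `c` joined to a directed
3-cycle `(x, y, z, x)` by three bidirected paths of odd length, pairwise
disjoint except in `c`. -/
def IsOdd3WheelWithCenter (D : Digraph' V) (c : V) : Prop :=
  ∃ (p₁ p₂ p₃ : List V) (x y z : V),
    IsOddBidirPathList p₁ c x ∧ IsOddBidirPathList p₂ c y ∧ IsOddBidirPathList p₃ c z ∧
    p₁.toFinset ∩ p₂.toFinset = {c} ∧ p₁.toFinset ∩ p₃.toFinset = {c} ∧
    p₂.toFinset ∩ p₃.toFinset = {c} ∧
    D.verts = p₁.toFinset ∪ p₂.toFinset ∪ p₃.toFinset ∧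
    D.arcs = pathDigonArcs p₁ ∪ pathDigonArcs p₂ ∪ pathDigonArcs p₃ ∪
      {(x, y), (y, z), (z, x)}

/-- `D` is an odd 3-wheel. -/
def IsOdd3Wheel (D : Digraph' V) : Prop := ∃ c : V, D.IsOdd3WheelWithCenter c

end Digraph'

/-- The digon graph `B(D)`: the undirected graph on the vertices of `D` whose
edges are the pairs of vertices joined by a digon in `D`. -/
def Digraph'.digonGraph {V : Type*} [DecidableEq V] (D : Digraph' V) : SimpleGraph V where
  Adj u v := D.HasDigon u v
  symm := ⟨fun u v h => ⟨h.2, h.1⟩⟩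
  loopless := ⟨fun u h => (D.wf _ h.1).2.2 rfl⟩

/-!
Let `C` be a cycle of `B(D)`. Deleting one arc `vw` of a digon of `C` leaves a 2-dicolourable
digraph; the colouring must give `v` and `w` the same colour (otherwise it 2-dicolours `D`), and
it alternates along the digons of the rest of `C`, so `C` has odd length. The bidirected odd
cycle on `C` is then a subdigraph of `D` that is not 2-dicolourable, so by criticality it is `D`.
-/

theorem SimpleGraph.Walk.map_toProd_darts {V : Type*} {G : SimpleGraph V} {u v : V}
    (p : G.Walk u v) : p.darts.map Dart.toProd = p.support.dropLast.zip p.support.tail :=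
  List.zip_of_prod (by rw [List.map_map]; exact p.map_fst_darts)
    (by rw [List.map_map]; exact p.map_snd_darts)

namespace Digraph'

open SimpleGraph

variable {V : Type*} [DecidableEq V]

theorem mem_of_mem_cyclicArcs {c : List V} {a : V × V} (ha : a ∈ cyclicArcs c) :
    a.1 ∈ c ∧ a.2 ∈ c := by
  rw [cyclicArcs, List.mem_toFinset] at ha
  exact ⟨(List.of_mem_zip ha).1, List.mem_rotate.mp (List.of_mem_zip ha).2⟩

theorem cyclicArcs_pair (u v : V) : cyclicArcs [u, v] = {(u, v), (v, u)} := by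
  ext; simp [cyclicArcs, List.rotate_cons_succ]

theorem cyclicArcs_support_tail {G : SimpleGraph V} {v : V} (p : G.Walk v v) :
    cyclicArcs p.support.tail = (p.darts.map Dart.toProd).toFinset := by
  cases p with
  | nil => rfl
  | @cons _ w _ h q =>
    have hrot : q.support.rotate 1 = q.support.tail ++ [w] := by
      rw [← q.cons_tail_support, List.rotate_cons_succ, List.rotate_zero]
      simp
    have hzip : q.support.zip (q.support.rotate 1) = q.darts.map Dart.toProd ++ [(v, w)] := by
      rw [hrot]
      conv_lhs => arg 1; rw [← q.dropLast_support_concat]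
      rw [List.zip_append (by simp), q.map_toProd_darts]
      rfl
    ext a
    simp [cyclicArcs, hzip]

theorem acyclicOn_of_subsingleton (D : Digraph' V) {S : Finset V}
    (hS : (S : Set V).Subsingleton) : D.AcyclicOn S := by
  rintro ⟨_ | ⟨x, _ | ⟨y, c⟩⟩, hnd, hlen, hmem, -⟩
  · simp at hlen
  · simp at hlen
  · have hxy : x ≠ y := by simp_all
    exact hxy (hS (hmem x (by simp)) (hmem y (by simp)))

theorem dicolourable_card_succ (D : Digraph' V) : D.Dicolourable (D.verts.card + 1) := by
  classical
  let φ : V → Fin (D.verts.card + 1) := fun v =>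
    if hv : v ∈ D.verts then (D.verts.equivFin ⟨v, hv⟩).castSucc else Fin.last _
  refine ⟨φ, fun i => D.acyclicOn_of_subsingleton fun x hx y hy => ?_⟩
  simp only [Finset.coe_filter, Set.mem_ofPred_eq] at hx hy
  have hxy : φ x = φ y := hx.2.trans hy.2.symm
  simp only [φ, dif_pos hx.1, dif_pos hy.1, Fin.castSucc_inj, Equiv.apply_eq_iff_eq,
    Subtype.mk.injEq] at hxy
  exact hxy

theorem Dicolourable.mono {D : Digraph' V} {j k : ℕ} (h : D.Dicolourable j) (hjk : j ≤ k) :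
    D.Dicolourable k := by
  obtain ⟨φ, hφ⟩ := h
  refine ⟨fun v => Fin.castLE hjk (φ v), fun i => ?_⟩
  rintro ⟨c, hnd, hlen, hmem, harcs⟩
  obtain ⟨v₀, hv₀⟩ := List.exists_mem_of_length_pos (by omega : 0 < c.length)
  refine hφ (φ v₀) ⟨c, hnd, hlen, fun v hv => ?_, harcs⟩
  have hv' := Finset.mem_filter.mp (hmem v hv)
  have hv₀' := Finset.mem_filter.mp (hmem v₀ hv₀)
  exact Finset.mem_filter.mpr ⟨hv'.1, Fin.castLE_injective hjk (hv'.2.trans hv₀'.2.symm)⟩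

theorem dicolourable_of_dichromatic_le {D : Digraph' V} {k : ℕ} (h : D.dichromatic ≤ k) :
    D.Dicolourable k :=
  Dicolourable.mono (Nat.sInf_mem (s := {k | D.Dicolourable k}) ⟨_, D.dicolourable_card_succ⟩) h

theorem not_dicolourable_of_lt_dichromatic {D : Digraph' V} {k : ℕ} (h : k < D.dichromatic) :
    ¬ D.Dicolourable k :=
  Nat.notMem_of_lt_sInf h

theorem Dicritical.not_dicolourable {D : Digraph' V} {k : ℕ} (hD : D.Dicritical (k + 1)) :
    ¬ D.Dicolourable k :=
  not_dicolourable_of_lt_dichromatic (by rw [hD.1]; exact k.lt_succ_self)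

theorem Dicritical.dicolourable_of_isProperSubdigraph {D H : Digraph' V} {k : ℕ}
    (hD : D.Dicritical k) (hH : H.IsProperSubdigraph D) : H.Dicolourable (k - 1) :=
  dicolourable_of_dichromatic_le (hD.2 H hH)

theorem Dicritical.eq_of_isSubdigraph {D H : Digraph' V} {k : ℕ} (hD : D.Dicritical (k + 1))
    (hH : H.IsSubdigraph D) (hk : ¬ H.Dicolourable k) : H.verts = D.verts ∧ H.arcs = D.arcs := by
  by_contra hne
  exact hk (hD.dicolourable_of_isProperSubdigraph ⟨hH, by tauto⟩)

theorem eraseArc_isProperSubdigraph {D : Digraph' V} {a : V × V} (ha : a ∈ D.arcs) :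
    (D.eraseArc a).IsProperSubdigraph D :=
  ⟨⟨subset_rfl, Finset.erase_subset _ _⟩,
    Or.inr fun he => Finset.notMem_erase a D.arcs (by rwa [show D.arcs.erase a = D.arcs from he])⟩

theorem IsDicolouring.ne_of_hasDigon {D : Digraph' V} {k : ℕ} {φ : V → Fin k}
    (hφ : D.IsDicolouring k φ) {u v : V} (huv : D.HasDigon u v) : φ u ≠ φ v := by
  intro heq
  have ⟨hu, hv, hne⟩ := D.wf _ huv.1
  refine hφ (φ u) ⟨[u, v], by simpa using hne, le_rfl, ?_, ?_⟩
  · simp [hu, hv, heq]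
  · rw [cyclicArcs_pair]
    exact Finset.insert_subset_iff.mpr ⟨huv.1, Finset.singleton_subset_iff.mpr huv.2⟩

theorem IsDicolouring.of_eraseArc {D : Digraph' V} {k : ℕ} {φ : V → Fin k} {u v : V}
    (hφ : (D.eraseArc (u, v)).IsDicolouring k φ) (huv : φ u ≠ φ v) : D.IsDicolouring k φ := by
  rintro i ⟨c, hnd, hlen, hmem, harcs⟩
  by_cases hc : (u, v) ∈ cyclicArcs c
  · have hu := Finset.mem_filter.mp (hmem u (mem_of_mem_cyclicArcs hc).1)
    have hv := Finset.mem_filter.mp (hmem v (mem_of_mem_cyclicArcs hc).2)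
    exact huv (hu.2.trans hv.2.symm)
  · refine hφ i ⟨c, hnd, hlen, hmem, fun a ha => Finset.mem_erase.mpr ⟨?_, harcs ha⟩⟩
    rintro rfl
    exact hc ha

theorem IsDicolouring.even_length_iff {D : Digraph' V} {φ : V → Fin 2} (hφ : D.IsDicolouring 2 φ)
    {G : SimpleGraph V} {u v : V} (p : G.Walk u v) (hp : ∀ d ∈ p.darts, D.HasDigon d.fst d.snd) :
    Even p.length ↔ φ u = φ v := by
  induction p with
  | nil => simp
  | @cons x y z h q ih =>
    have hxy : φ x ≠ φ y := hφ.ne_of_hasDigon (hp _ List.mem_cons_self)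
    rw [Walk.length_cons, Nat.even_add_one, ih fun d hd => hp d (List.mem_cons_of_mem _ hd)]
    have fin_two : ∀ a b c : Fin 2, a ≠ b → (¬ b = c ↔ a = c) := by decide
    exact fin_two _ _ _ hxy

def bidirectedCycle (c : List V) (hc : ∀ a ∈ cyclicArcs c, a.1 ≠ a.2) : Digraph' V where
  verts := c.toFinset
  arcs := symArcs (cyclicArcs c)
  wf a ha := by
    rcases Finset.mem_union.mp ha with ha | ha
    · have ⟨h₁, h₂⟩ := mem_of_mem_cyclicArcs ha
      exact ⟨List.mem_toFinset.mpr h₁, List.mem_toFinset.mpr h₂, hc a ha⟩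
    · obtain ⟨b, hb, rfl⟩ := Finset.mem_image.mp ha
      have ⟨h₁, h₂⟩ := mem_of_mem_cyclicArcs hb
      exact ⟨List.mem_toFinset.mpr h₂, List.mem_toFinset.mpr h₁, (hc b hb).symm⟩

theorem bidirectedCycle_hasDigon {c : List V} {hc : ∀ a ∈ cyclicArcs c, a.1 ≠ a.2} {a : V × V}
    (ha : a ∈ cyclicArcs c) : (bidirectedCycle c hc).HasDigon a.1 a.2 :=
  ⟨Finset.mem_union_left _ ha, Finset.mem_union_right _ (Finset.mem_image_of_mem Prod.swap ha)⟩

theorem hasDigon_of_mem_cyclicArcs_support_tail {D : Digraph' V} {v : V}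
    {p : D.digonGraph.Walk v v} {a : V × V} (ha : a ∈ cyclicArcs p.support.tail) :
    D.HasDigon a.1 a.2 := by
  rw [cyclicArcs_support_tail, List.mem_toFinset, List.mem_map] at ha
  obtain ⟨d, -, rfl⟩ := ha
  exact d.adj

theorem Dicritical.odd_length_of_isCycle {D : Digraph' V} (hD : D.Dicritical 3) {v : V}
    {p : D.digonGraph.Walk v v} (hp : p.IsCycle) : Odd p.length := by
  cases p with
  | nil => exact absurd hp Walk.not_isCycle_nil
  | @cons _ w _ h q =>
    obtain ⟨φ, hφ⟩ := hD.dicolourable_of_isProperSubdigraph (eraseArc_isProperSubdigraph h.1)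
    have hvw : φ v = φ w := by
      by_contra hne
      exact hD.not_dicolourable ⟨φ, hφ.of_eraseArc hne⟩
    have hq : ∀ d ∈ q.darts, (D.eraseArc (v, w)).HasDigon d.fst d.snd := by
      intro d hd
      have hedge : s(d.fst, d.snd) ≠ s(v, w) := fun he =>
        ((Walk.cons_isCycle_iff q h).mp hp).2 (he ▸ List.mem_map_of_mem hd)
      refine ⟨Finset.mem_erase.mpr ⟨fun he => hedge ?_, d.adj.1⟩,
        Finset.mem_erase.mpr ⟨fun he => hedge ?_, d.adj.2⟩⟩
      · rw [(Prod.mk.inj he).1, (Prod.mk.inj he).2]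
      · rw [Sym2.eq_swap, (Prod.mk.inj he).1, (Prod.mk.inj he).2]
    rw [Walk.length_cons]
    exact ((hφ.even_length_iff q hq).mpr hvw.symm).add_one

theorem Dicritical.isBidirectedOddCycle_of_isCycle {D : Digraph' V} (hD : D.Dicritical 3) {v : V}
    {p : D.digonGraph.Walk v v} (hp : p.IsCycle) (hodd : Odd p.length) :
    D.IsBidirectedOddCycle := by
  let C := bidirectedCycle p.support.tail fun _ ha =>
    (D.wf _ (hasDigon_of_mem_cyclicArcs_support_tail ha).1).2.2
  have hC : ¬ C.Dicolourable 2 := by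
    rintro ⟨φ, hφ⟩
    refine Nat.not_even_iff_odd.mpr hodd ((hφ.even_length_iff p fun d hd => ?_).mpr rfl)
    apply bidirectedCycle_hasDigon (a := d.toProd)
    rw [cyclicArcs_support_tail]
    exact List.mem_toFinset.mpr (List.mem_map_of_mem hd)
  have hCD : C.IsSubdigraph D := by
    constructor
    · intro x (hx : x ∈ p.support.tail.toFinset)
      rw [List.mem_toFinset, ← p.map_snd_darts, List.mem_map] at hx
      obtain ⟨d, -, rfl⟩ := hx
      exact (D.wf _ d.adj.1).2.1
    · intro a ha
      rcases Finset.mem_union.mp ha with ha | ha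
      · exact (hasDigon_of_mem_cyclicArcs_support_tail ha).1
      · obtain ⟨b, hb, rfl⟩ := Finset.mem_image.mp ha
        exact (hasDigon_of_mem_cyclicArcs_support_tail hb).2
  obtain ⟨hV, hA⟩ := hD.eq_of_isSubdigraph hCD hC
  exact ⟨p.support.tail, hp.support_nodup, by simpa using hp.three_le_length, by simpa using hodd,
    hV.symm, hA.symm⟩

end Digraph'

open Digraph' in
/-- If `D` is a 3-dicritical digraph which is not a bidirected
odd cycle, then the digon graph `B(D)` contains no cycle, i.e. it is a forest. -/
theorem digonGraph_isAcyclic {V : Type*} [DecidableEq V]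
    (D : Digraph' V) (hcrit : Digraph'.Dicritical 3 D)
    (hnc : ¬ D.IsBidirectedOddCycle) :
    D.digonGraph.IsAcyclic := fun _ _ hp =>
  hnc (hcrit.isBidirectedOddCycle_of_isCycle hp (hcrit.odd_length_of_isCycle hp))
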